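/- arXiv:1603.00885 — 5 statements merged into one kernel-verified Lean document; each statement's English description precedes it below -/
import Mathlib

section
/- For every n ≥ 0 and every set U of at most n vertices of the complete multipartite graph K_{3,3,1,...,1} (two parts of size 3 and n parts of size 1), the induced subgraph on the complement of U contains a K_{3,3} minor; hence K_{3^2,1^n} is not n-apex. -/
open SimpleGraph

/-- `H` is a minor of `G`: branch-set definition. -/
def IsMinor {W V : Type*} (H : SimpleGraph W) (G : SimpleGraph V) : Prop :=
  ∃ f : W → Set V,
    (∀ w, (f w).Nonempty) ∧
    (∀ w, (G.induce (f w)).Connected) ∧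
    (Pairwise fun w₁ w₂ => Disjoint (f w₁) (f w₂)) ∧
    ∀ ⦃w₁ w₂⦄, H.Adj w₁ w₂ → ∃ v₁ ∈ f w₁, ∃ v₂ ∈ f w₂, G.Adj v₁ v₂

/-- The complete graph on 5 vertices. -/
def K5 : SimpleGraph (Fin 5) := ⊤

/-- The complete bipartite graph `K_{3,3}`. -/
def K33 : SimpleGraph (Fin 3 ⊕ Fin 3) := completeBipartiteGraph (Fin 3) (Fin 3)

/-- Planarity in Wagner's form: no `K₅` minor and no `K_{3,3}` minor. -/
def IsPlanar {V : Type*} (G : SimpleGraph V) : Prop :=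
  ¬ IsMinor K5 G ∧ ¬ IsMinor K33 G

/-- `G` is `n`-apex: some set of at most `n` vertices can be deleted to leave a planar graph. -/
def IsNApex {V : Type*} (G : SimpleGraph V) (n : ℕ) : Prop :=
  ∃ U : Finset V, U.card ≤ n ∧ IsPlanar (G.induce (↑U : Set V)ᶜ)

/-- The complete multipartite graph `K_{3,3,1,…,1}` with two parts of size 3
and `n` singleton parts. -/
def KMulti (n : ℕ) : SimpleGraph (Fin 3 ⊕ Fin 3 ⊕ Fin n) :=
  SimpleGraph.fromRel (fun x y =>
    match x, y with
    | Sum.inl _, Sum.inl _ => False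
    | Sum.inr (Sum.inl _), Sum.inr (Sum.inl _) => False
    | Sum.inr (Sum.inr i), Sum.inr (Sum.inr j) => i ≠ j
    | _, _ => True)

/-!
Deleting at most `n` vertices of `K_{3²,1ⁿ}` leaves at least six. Let `L` consist of the surviving
vertices of the first 3-part, topped up to three vertices by surviving singletons, and let `R` be any
three further survivors. Then `L` misses the second 3-part, and `R` misses the first because `L`
already contains all of its survivors. Hence every vertex of `L` is adjacent to every vertex of `R`:
the six vertices span a `K_{3,3}` subgraph, which is in particular a minor.
-/

theorem IsMinor.of_injective_hom {W V : Type*} {H : SimpleGraph W} {G : SimpleGraph V}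
    (f : H →g G) (hf : Function.Injective f) : IsMinor H G := by
  refine ⟨fun w => {f w}, fun w => Set.singleton_nonempty _, fun w => ?_, ?_, ?_⟩
  · exact ⟨Preconnected.of_subsingleton⟩
  · exact fun w₁ w₂ hne => Set.disjoint_singleton.mpr (hf.ne hne)
  · exact fun w₁ w₂ hadj => ⟨f w₁, rfl, f w₂, rfl, f.map_adj hadj⟩

theorem isMinor_completeBipartiteGraph_induce {α β V : Type*} [Fintype α] [Fintype β]
    {G : SimpleGraph V} {s : Set V} {L R : Finset V} (hLs : ↑L ⊆ s) (hRs : ↑R ⊆ s)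
    (hL : L.card = Fintype.card α) (hR : R.card = Fintype.card β)
    (hLR : ∀ x ∈ L, ∀ y ∈ R, G.Adj x y) :
    IsMinor (completeBipartiteGraph α β) (G.induce s) := by
  obtain ⟨eL⟩ : Nonempty (α ≃ L) := Fintype.card_eq.mp (by simp [hL])
  obtain ⟨eR⟩ : Nonempty (β ≃ R) := Fintype.card_eq.mp (by simp [hR])
  let l : α → s := fun a => ⟨eL a, hLs (eL a).2⟩
  let r : β → s := fun b => ⟨eR b, hRs (eR b).2⟩
  have hadj : ∀ a b, G.Adj (l a) (r b) := fun a b => hLR _ (eL a).2 _ (eR b).2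
  let f : completeBipartiteGraph α β →g G.induce s :=
    { toFun := Sum.elim l r
      map_rel' := by
        rintro (a | a) (b | b) h
        · simp at h
        · exact hadj a b
        · exact (hadj b a).symm
        · simp at h }
  refine IsMinor.of_injective_hom f (Function.Injective.sumElim ?_ ?_ ?_)
  · exact fun a₁ a₂ h => eL.injective (Subtype.ext (congrArg (Subtype.val : s → V) h))
  · exact fun b₁ b₂ h => eR.injective (Subtype.ext (congrArg (Subtype.val : s → V) h))
  · exact fun a b h => G.ne_of_adj (hadj a b) (congrArg Subtype.val h)

theorem Finset.exists_disjoint_card_eq_of_card_le {V : Type*} [DecidableEq V]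
    {S A B : Finset V} {k : ℕ} (hAB : Disjoint A B) (hA : A.card ≤ k) (hB : B.card ≤ k)
    (hS : 2 * k ≤ S.card) :
    ∃ L R : Finset V, L ⊆ S ∧ R ⊆ S ∧ Disjoint L R ∧ Disjoint L B ∧ Disjoint R A ∧
      L.card = k ∧ R.card = k := by
  -- `L` swallows all of `S ∩ A`, so whatever `R` takes from `S \ L` misses `A`.
  obtain ⟨L, hAL, hLS, hL⟩ := Finset.exists_subsuperset_card_eq
    (s := S ∩ A) (t := S \ B) (n := k)
    (fun x hx => Finset.mem_sdiff.mpr ⟨(Finset.mem_inter.mp hx).1,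
      Finset.disjoint_left.mp hAB (Finset.mem_inter.mp hx).2⟩)
    ((Finset.card_le_card Finset.inter_subset_right).trans hA)
    (by have := Finset.le_card_sdiff B S; omega)
  have hLS' : L ⊆ S := hLS.trans Finset.sdiff_subset
  obtain ⟨R, hRS, hR⟩ := Finset.exists_subset_card_eq (s := S \ L) (n := k)
    (by rw [Finset.card_sdiff_of_subset hLS']; omega)
  refine ⟨L, R, hLS', hRS.trans Finset.sdiff_subset, ?_, ?_, ?_, hL, hR⟩
  · exact Finset.disjoint_of_subset_right hRS Finset.disjoint_sdiff
  · exact Finset.disjoint_of_subset_left hLS Finset.sdiff_disjoint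
  · refine Finset.disjoint_left.mpr fun x hxR hxA => ?_
    have hx := Finset.mem_sdiff.mp (hRS hxR)
    exact hx.2 (hAL (Finset.mem_inter.mpr ⟨hx.1, hxA⟩))

namespace KMulti

variable {n : ℕ}

def part₁ (n : ℕ) : Finset (Fin 3 ⊕ Fin 3 ⊕ Fin n) := Finset.univ.map .inl

def part₂ (n : ℕ) : Finset (Fin 3 ⊕ Fin 3 ⊕ Fin n) :=
  Finset.univ.map (Function.Embedding.inl.trans .inr)

theorem card_part₁ : (part₁ n).card = 3 := by simp [part₁]

theorem card_part₂ : (part₂ n).card = 3 := by simp [part₂]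

theorem disjoint_part₁_part₂ : Disjoint (part₁ n) (part₂ n) := by
  simp [part₁, part₂, Finset.disjoint_left]

theorem adj_of_ne {x y : Fin 3 ⊕ Fin 3 ⊕ Fin n} (hxy : x ≠ y) (hx : x ∉ part₂ n)
    (hy : y ∉ part₁ n) : (KMulti n).Adj x y := by
  rcases x with a | b | c <;> rcases y with a' | b' | c' <;>
    simp_all [KMulti, part₁, part₂, SimpleGraph.fromRel_adj]

end KMulti

/-- For every `n` and every set `U` of at most `n` vertices of `K_{3²,1ⁿ}`,
the induced subgraph on the complement of `U` has a `K_{3,3}` minor;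
hence `K_{3²,1ⁿ}` is not `n`-apex. -/
theorem stmt_1 (n : ℕ) :
    (∀ U : Finset (Fin 3 ⊕ Fin 3 ⊕ Fin n), U.card ≤ n →
      IsMinor K33 ((KMulti n).induce (↑U : Set (Fin 3 ⊕ Fin 3 ⊕ Fin n))ᶜ)) ∧
    ¬ IsNApex (KMulti n) n := by
  have minor : ∀ U : Finset (Fin 3 ⊕ Fin 3 ⊕ Fin n), U.card ≤ n →
      IsMinor K33 ((KMulti n).induce (↑U : Set (Fin 3 ⊕ Fin 3 ⊕ Fin n))ᶜ) := by
    intro U hU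
    have hS : 2 * 3 ≤ Uᶜ.card := by
      simp only [Finset.card_compl, Fintype.card_sum, Fintype.card_fin]; omega
    obtain ⟨L, R, hLS, hRS, hLR, hL₂, hR₁, hL, hR⟩ :=
      Finset.exists_disjoint_card_eq_of_card_le KMulti.disjoint_part₁_part₂
        KMulti.card_part₁.le KMulti.card_part₂.le hS
    refine isMinor_completeBipartiteGraph_induce (by simpa using Finset.coe_subset.mpr hLS)
      (by simpa using Finset.coe_subset.mpr hRS) (by simpa using hL) (by simpa using hR) fun x hx y hy => ?_
    exact KMulti.adj_of_ne (fun hxy => Finset.disjoint_left.mp hLR hx (hxy ▸ hy))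
      (Finset.disjoint_left.mp hL₂ hx) (Finset.disjoint_left.mp hR₁ hy)
  exact ⟨minor, fun ⟨U, hU, hplanar⟩ => hplanar.2 (minor U hU)⟩
end

section
/- For every edge e of K_{3^2,1^n}, the contraction K_{3^2,1^n}/e is n-apex: one can delete n vertices so that the remaining 5-vertex graph is a proper subgraph of K_5 and hence planar. -/
open SimpleGraph

/-- Contraction of the edge `uv` of `G`: identify `v` into `u`. -/
def contractEdge {V : Type*} (G : SimpleGraph V) (u v : V) :
    SimpleGraph {w : V // w ≠ v} :=
  SimpleGraph.fromRel (fun x y =>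
    G.Adj x.1 y.1 ∨ (x.1 = u ∧ G.Adj v y.1) ∨ (y.1 = u ∧ G.Adj v x.1))

lemma planar_small {V : Type*} [Fintype V] (G : SimpleGraph V)
    (h5 : Fintype.card V ≤ 5) (a b : V) (hab : a ≠ b) (hnadj : ¬ G.Adj a b) :
    IsPlanar G := by
  constructor
  · rintro ⟨f, hne, -, hdisj, hadj⟩
    choose r hr using hne
    have hinj : Function.Injective r := by
      intro i j hij
      by_contra h
      exact Set.disjoint_left.1 (hdisj h) (hr i) (hij ▸ hr j)
    have hcard : Fintype.card (Fin 5) ≤ Fintype.card V :=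
      Fintype.card_le_of_injective r hinj
    have hbij : Function.Bijective r :=
      (Fintype.bijective_iff_injective_and_card r).2 ⟨hinj, by simp at hcard ⊢; omega⟩
    obtain ⟨i, rfl⟩ := hbij.2 a
    obtain ⟨j, rfl⟩ := hbij.2 b
    have hij : i ≠ j := fun h => hab (by rw [h])
    obtain ⟨v₁, hv₁, v₂, hv₂, hGadj⟩ := hadj (show K5.Adj i j from hij)
    have e1 : v₁ = r i := by
      obtain ⟨k, rfl⟩ := hbij.2 v₁
      by_contra h
      have hk : k ≠ i := fun hk => h (by rw [hk])
      exact Set.disjoint_left.1 (hdisj hk) (hr k) hv₁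
    have e2 : v₂ = r j := by
      obtain ⟨k, rfl⟩ := hbij.2 v₂
      by_contra h
      have hk : k ≠ j := fun hk => h (by rw [hk])
      exact Set.disjoint_left.1 (hdisj hk) (hr k) hv₂
    exact hnadj (e1 ▸ e2 ▸ hGadj)
  · rintro ⟨f, hne, -, hdisj, -⟩
    choose r hr using hne
    have hinj : Function.Injective r := by
      intro i j hij
      by_contra h
      exact Set.disjoint_left.1 (hdisj h) (hr i) (hij ▸ hr j)
    have hcard : Fintype.card (Fin 3 ⊕ Fin 3) ≤ Fintype.card V :=
      Fintype.card_le_of_injective r hinj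
    simp at hcard
    omega

lemma apex_helper {V : Type*} [Fintype V] [DecidableEq V] (G : SimpleGraph V) (n : ℕ)
    (hV : Fintype.card V = n + 5) (W : Finset V) (hW : W.card = n)
    (x y : V) (hx : x ∉ W) (hy : y ∉ W) (hxy : x ≠ y)
    (hnadj : ¬ G.Adj x y) :
    W.card = n ∧ IsPlanar (G.induce (↑W : Set V)ᶜ) := by
  refine ⟨hW, ?_⟩
  have hx' : x ∈ (↑W : Set V)ᶜ := by simpa using hx
  have hy' : y ∈ (↑W : Set V)ᶜ := by simpa using hy
  apply planar_small _ ?_ ⟨x, hx'⟩ ⟨y, hy'⟩ (by simpa using hxy) (by simpa using hnadj)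
  have h : Fintype.card ↥((↑W : Set V)ᶜ) = Fintype.card V - W.card := by
    rw [Fintype.card_compl_set]; simp
  omega

/-- For every edge `e` of `K_{3²,1ⁿ}`, the contraction `K_{3²,1ⁿ}/e` is `n`-apex:
one can delete `n` vertices so that the remaining (5-vertex) graph is planar. -/
theorem stmt_6 (n : ℕ) (u v : Fin 3 ⊕ Fin 3 ⊕ Fin n) (huv : (KMulti n).Adj u v) :
    (∃ W : Finset {w : Fin 3 ⊕ Fin 3 ⊕ Fin n // w ≠ v}, W.card = n ∧
      IsPlanar ((contractEdge (KMulti n) u v).induce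
        (↑W : Set {w : Fin 3 ⊕ Fin 3 ⊕ Fin n // w ≠ v})ᶜ)) ∧
    IsNApex (contractEdge (KMulti n) u v) n := by
  have hVcard : Fintype.card {w : Fin 3 ⊕ Fin 3 ⊕ Fin n // w ≠ v} = n + 5 := by
    rw [Fintype.card_subtype_compl]
    simp [Fintype.card_subtype_eq]
    omega
  have hpair : ∀ b : Fin 3, ∃ c d : Fin 3, c ≠ d ∧ c ≠ b ∧ d ≠ b := by decide
  have key : ∃ W : Finset {w : Fin 3 ⊕ Fin 3 ⊕ Fin n // w ≠ v}, W.card = n ∧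
      IsPlanar ((contractEdge (KMulti n) u v).induce
        (↑W : Set {w : Fin 3 ⊕ Fin 3 ⊕ Fin n // w ≠ v})ᶜ) := by
    rcases v with b | b | j
    · -- v = inl b
      obtain ⟨c, d, hcd, hcb, hdb⟩ := hpair b
      rcases u with a | a | a
      · exact absurd huv (by simp [KMulti])
      · refine ⟨_, apex_helper _ n hVcard ((Finset.univ : Finset (Fin n)).image
            (fun k => ⟨Sum.inr (Sum.inr k), by simp⟩)) ?_
            ⟨Sum.inl c, by simp [hcb]⟩ ⟨Sum.inl d, by simp [hdb]⟩
            (by simp) (by simp) (by simp [hcd]) (by simp [contractEdge, KMulti])⟩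
        rw [Finset.card_image_of_injective _ (fun k l h => by simpa using h)]
        simp
      · refine ⟨_, apex_helper _ n hVcard ((Finset.univ : Finset (Fin n)).image
            (fun k => ⟨Sum.inr (Sum.inr k), by simp⟩)) ?_
            ⟨Sum.inl c, by simp [hcb]⟩ ⟨Sum.inl d, by simp [hdb]⟩
            (by simp) (by simp) (by simp [hcd]) (by simp [contractEdge, KMulti])⟩
        rw [Finset.card_image_of_injective _ (fun k l h => by simpa using h)]
        simp
    · -- v = inr (inl b)
      obtain ⟨c, d, hcd, hcb, hdb⟩ := hpair b
      rcases u with a | a | a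
      · refine ⟨_, apex_helper _ n hVcard ((Finset.univ : Finset (Fin n)).image
            (fun k => ⟨Sum.inr (Sum.inr k), by simp⟩)) ?_
            ⟨Sum.inr (Sum.inl c), by simp [hcb]⟩ ⟨Sum.inr (Sum.inl d), by simp [hdb]⟩
            (by simp) (by simp) (by simp [hcd]) (by simp [contractEdge, KMulti])⟩
        rw [Finset.card_image_of_injective _ (fun k l h => by simpa using h)]
        simp
      · exact absurd huv (by simp [KMulti])
      · refine ⟨_, apex_helper _ n hVcard ((Finset.univ : Finset (Fin n)).image
            (fun k => ⟨Sum.inr (Sum.inr k), by simp⟩)) ?_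
            ⟨Sum.inr (Sum.inl c), by simp [hcb]⟩ ⟨Sum.inr (Sum.inl d), by simp [hdb]⟩
            (by simp) (by simp) (by simp [hcd]) (by simp [contractEdge, KMulti])⟩
        rw [Finset.card_image_of_injective _ (fun k l h => by simpa using h)]
        simp
    · -- v = inr (inr j)
      have hn : 0 < n := Nat.pos_of_ne_zero (fun h => by subst h; exact j.elim0)
      rcases u with a | a | i
      · -- u = inl a
        obtain ⟨c, d, hcd, hca, hda⟩ := hpair a
        refine ⟨_, apex_helper _ n hVcard (insert ⟨Sum.inr (Sum.inl 0), by simp⟩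
            (((Finset.univ.erase j).attach).image
              (fun k => ⟨Sum.inr (Sum.inr k.1),
                by simpa using (Finset.mem_erase.1 k.2).1⟩))) ?_
            ⟨Sum.inl c, by simp⟩ ⟨Sum.inl d, by simp⟩
            (by simp) (by simp) (by simp [hcd])
            (by simp [contractEdge, KMulti, hca, hda])⟩
        rw [Finset.card_insert_of_notMem (by simp),
          Finset.card_image_of_injective _ (fun k l h => Subtype.ext (by simpa using h)),
          Finset.card_attach, Finset.card_erase_of_mem (Finset.mem_univ j),
          Finset.card_univ, Fintype.card_fin]
        omega
      · -- u = inr (inl a)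
        obtain ⟨c, d, hcd, hca, hda⟩ := hpair a
        refine ⟨_, apex_helper _ n hVcard (insert ⟨Sum.inl 0, by simp⟩
            (((Finset.univ.erase j).attach).image
              (fun k => ⟨Sum.inr (Sum.inr k.1),
                by simpa using (Finset.mem_erase.1 k.2).1⟩))) ?_
            ⟨Sum.inr (Sum.inl c), by simp⟩ ⟨Sum.inr (Sum.inl d), by simp⟩
            (by simp) (by simp) (by simp [hcd])
            (by simp [contractEdge, KMulti, hca, hda])⟩
        rw [Finset.card_insert_of_notMem (by simp),
          Finset.card_image_of_injective _ (fun k l h => Subtype.ext (by simpa using h)),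
          Finset.card_attach, Finset.card_erase_of_mem (Finset.mem_univ j),
          Finset.card_univ, Fintype.card_fin]
        omega
      · -- u = inr (inr i)
        have hij : i ≠ j := by intro h; subst h; simp [KMulti] at huv
        have hn2 : 2 ≤ n := by
          by_contra h
          push_neg at h
          exact hij (Fin.ext (by omega))
        refine ⟨_, apex_helper _ n hVcard (insert ⟨Sum.inl 0, by simp⟩
            (insert ⟨Sum.inr (Sum.inl 0), by simp⟩
              ((((Finset.univ.erase j).erase i).attach).image
                (fun k => ⟨Sum.inr (Sum.inr k.1),
                  by simpa using (Finset.mem_erase.1 (Finset.mem_erase.1 k.2).2).1⟩)))) ?_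
            ⟨Sum.inl 1, by simp⟩ ⟨Sum.inl 2, by simp⟩
            (by simp) (by simp) (by simp) (by simp [contractEdge, KMulti])⟩
        rw [Finset.card_insert_of_notMem (by simp),
          Finset.card_insert_of_notMem (by simp),
          Finset.card_image_of_injective _ (fun k l h => Subtype.ext (by simpa using h)),
          Finset.card_attach,
          Finset.card_erase_of_mem (Finset.mem_erase.2 ⟨hij, Finset.mem_univ i⟩),
          Finset.card_erase_of_mem (Finset.mem_univ j),
          Finset.card_univ, Fintype.card_fin]
        omega
  obtain ⟨W, hc, hp⟩ := key
  exact ⟨⟨W, hc, hp⟩, ⟨W, hc.le, hp⟩⟩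
end

section
/- For every edge e of K_{3^2,1^n}, the deletion K_{3^2,1^n} − e is n-apex: there is a set of 6 vertices of K_{3^2,1^n} − e whose induced subgraph is planar and whose complement has size n. -/
open SimpleGraph

/-!
Take `S` to be `u`, `v` and two vertices from each part of size three, avoiding `u` and `v`
(an independent set meets the edge `uv` at most once). After deleting `uv`, the graph induced
on `S` is properly coloured by the three pairs, so it is a subgraph of the octahedron
`K_{2,2,2}`. Such a graph has no `K₅` minor: five disjoint branch sets in six vertices
include four singletons, which would form a `K₄`, and a `K₄` is not 3-colourable. Nor has it
a `K_{3,3}` minor: all six branch sets would be singletons, giving a spanning `K_{3,3}`, and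
then each side needs two colours of its own, four in all.
-/

open Finset

theorem IsMinor.exists_injective_adj {W V : Type*} [Fintype W] [Fintype V]
    {H : SimpleGraph W} {G : SimpleGraph V} (h : IsMinor H G) :
    ∃ (g : W → V) (s : Finset W), Function.Injective g ∧
      2 * Fintype.card W ≤ Fintype.card V + #s ∧
      ∀ w ∈ s, ∀ w' ∈ s, H.Adj w w' → G.Adj (g w) (g w') := by
  classical
  obtain ⟨f, hne, -, hdisj, hadj⟩ := h
  choose g hg using hne
  let F : W → Finset V := fun w => (f w).toFinset
  let s : Finset W := {w | #(F w) ≤ 1}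
  have hsing : ∀ w ∈ s, ∀ x ∈ f w, x = g w := fun w hw x hx =>
    card_le_one.1 (mem_filter.1 hw).2 x (by simpa [F] using hx) (g w) (by simpa [F] using hg w)
  refine ⟨g, s, fun w w' he => ?_, ?_, fun w hw w' hw' hww' => ?_⟩
  · by_contra hne
    exact Set.disjoint_left.1 (hdisj hne) (hg w) (he ▸ hg w')
  · have hsum : ∑ w, #(F w) ≤ Fintype.card V := by
      rw [← card_biUnion fun w _ w' _ hne => by simpa [F] using hdisj hne]
      exact card_le_univ _
    have hlow : ∀ w, 2 ≤ #(F w) + if w ∈ s then 1 else 0 := fun w => by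
      have : 0 < #(F w) := card_pos.2 ⟨g w, by simpa [F] using hg w⟩
      split_ifs with hw
      · omega
      · simp only [s, mem_filter, mem_univ, true_and] at hw
        omega
    calc 2 * Fintype.card W = ∑ w : W, 2 := by simp [mul_comm]
      _ ≤ ∑ w, (#(F w) + if w ∈ s then 1 else 0) := sum_le_sum fun w _ => hlow w
      _ ≤ Fintype.card V + #s := by
        rw [sum_add_distrib, sum_boole, filter_mem_eq_inter, univ_inter]
        simpa using hsum
  · obtain ⟨x, hx, y, hy, hxy⟩ := hadj hww'
    rwa [hsing w hw x hx, hsing w' hw' y hy] at hxy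

theorem K33_exists_card_colorClass_gt_two (C : K33.Coloring (Fin 3)) :
    ∃ c, 2 < #{w | C w = c} := by
  by_contra! hC
  have side_card {α : Type} [Fintype α] (ι : α ↪ Fin 3 ⊕ Fin 3) :
      Fintype.card α ≤ 2 * #(univ.image (C ∘ ι)) :=
    card_le_mul_card_image univ 2 fun c _ => (hC c).trans' <|
      card_le_card_of_injOn ι (fun a ha => by simpa using ha) ι.injective.injOn
  have hdisj : Disjoint (univ.image (C ∘ Function.Embedding.inl))
      (univ.image (C ∘ Function.Embedding.inr)) := by
    simp only [Finset.disjoint_left, mem_image, mem_univ, true_and, not_exists]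
    rintro _ ⟨i, rfl⟩ j hij
    exact C.valid (by simp [K33]) hij.symm
  have hcolors := card_union_of_disjoint hdisj ▸ card_le_univ (_ ∪ _)
  have hleft := side_card Function.Embedding.inl
  have hright := side_card Function.Embedding.inr
  simp only [Fintype.card_fin] at hcolors hleft hright
  omega

theorem isPlanar_of_coloring {V : Type*} [Fintype V] {G : SimpleGraph V}
    (C : G.Coloring (Fin 3)) (hC : ∀ c, #{v | C v = c} ≤ 2) : IsPlanar G := by
  have hV : Fintype.card V ≤ 6 :=
    (card_le_mul_card_image univ 2 fun c _ => hC c).trans <| by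
      grw [card_le_univ (univ.image C), Fintype.card_fin]
  constructor
  · intro hm
    obtain ⟨g, s, -, hs, hadj⟩ := hm.exists_injective_adj
    have hs4 : #(univ : Finset (Fin 3)) < #s := by
      simp only [Fintype.card_fin, card_univ] at hs ⊢
      omega
    obtain ⟨w, hw, w', hw', hne, heq⟩ :=
      exists_ne_map_eq_of_card_lt_of_maps_to hs4 (f := C ∘ g) fun _ _ => mem_univ _
    exact C.valid (hadj w hw w' hw' hne) heq
  · intro hm
    obtain ⟨g, s, hg, hs, hadj⟩ := hm.exists_injective_adj
    have hs6 : s = univ := by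
      refine eq_univ_of_card s <| le_antisymm (card_le_univ s) ?_
      simp only [Fintype.card_sum, Fintype.card_fin] at hs ⊢
      omega
    subst hs6
    let φ : K33 →g G := ⟨g, fun h => hadj _ (mem_univ _) _ (mem_univ _) h⟩
    obtain ⟨c, hc⟩ := K33_exists_card_colorClass_gt_two (C.comp φ)
    refine (hC c).not_gt (hc.trans_le ?_)
    exact card_le_card_of_injOn g (fun w hw => by simpa [φ] using hw) hg.injOn

theorem isPlanar_induce_union_of_isIndepSet {V : Type*} [DecidableEq V] {G : SimpleGraph V}
    {s t r : Finset V} (hs : G.IsIndepSet s) (ht : G.IsIndepSet t) (hr : G.IsIndepSet r)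
    (hs₂ : #s ≤ 2) (ht₂ : #t ≤ 2) (hr₂ : #r ≤ 2) :
    IsPlanar (G.induce ↑(s ∪ t ∪ r)) := by
  let P : Fin 3 → Finset V := ![s, t, r]
  have hP : ∀ c, G.IsIndepSet ↑(P c) ∧ #(P c) ≤ 2 := by
    intro c; fin_cases c <;> simp [P, *]
  let col : V → Fin 3 := fun x => if x ∈ s then 0 else if x ∈ t then 1 else 2
  have mem_col : ∀ x ∈ s ∪ t ∪ r, x ∈ P (col x) := by
    intro x hx
    simp only [col]
    split_ifs <;> simp_all [P]
  refine isPlanar_of_coloring (Coloring.mk (fun x => col x) fun {x y} hxy heq => ?_) fun c => ?_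
  · exact (hP (col x)).1 (mem_col x x.2) (heq ▸ mem_col y y.2) (G.ne_of_adj hxy) hxy
  · refine le_trans ?_ (hP c).2
    refine card_le_card_of_injOn Subtype.val (fun x hx => ?_) Subtype.val_injective.injOn
    have hc : col x = c := (mem_filter.1 hx).2
    exact hc ▸ mem_col x x.2

theorem SimpleGraph.IsIndepSet.exists_subset_sdiff_card_eq {V : Type*} [DecidableEq V]
    {G : SimpleGraph V} {I : Finset V} (hI : G.IsIndepSet I) {u v : V} (huv : G.Adj u v)
    {k : ℕ} (hk : k + 1 ≤ #I) : ∃ t ⊆ I \ {u, v}, #t = k := by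
  apply exists_subset_card_eq
  have hinter : #(I ∩ {u, v}) ≤ 1 := card_le_one.2 fun x hx y hy => by
    by_contra hxy
    simp only [mem_inter, mem_insert, mem_singleton] at hx hy
    obtain ⟨hxI, rfl | rfl⟩ := hx <;> obtain ⟨hyI, rfl | rfl⟩ := hy
    exacts [hxy rfl, hI hxI hyI hxy huv, hI hxI hyI hxy huv.symm, hxy rfl]
  have := card_sdiff_add_card_inter I {u, v}
  omega

theorem KMulti.exists_card_eq_six_isPlanar_induce_deleteEdges {n : ℕ}
    {u v : Fin 3 ⊕ Fin 3 ⊕ Fin n} (huv : (KMulti n).Adj u v) :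
    ∃ S : Finset (Fin 3 ⊕ Fin 3 ⊕ Fin n), #S = 6 ∧
      IsPlanar (((KMulti n).deleteEdges {s(u, v)}).induce ↑S) := by
  set G := (KMulti n).deleteEdges {s(u, v)}
  have isIndepSet_of_subset {I J : Finset _} (hJ : (KMulti n).IsIndepSet J)
      (hIJ : I ⊆ J \ {u, v}) : G.IsIndepSet I :=
    (hJ.mono fun x hx => (mem_sdiff.1 (hIJ hx)).1).mono' fun _ _ h hG => h hG.1
  let A : Finset (Fin 3 ⊕ Fin 3 ⊕ Fin n) := univ.map .inl
  let B : Finset (Fin 3 ⊕ Fin 3 ⊕ Fin n) := univ.map (.trans .inl .inr)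
  have hA : (KMulti n).IsIndepSet A := by simp [A, Set.Pairwise, KMulti]
  have hB : (KMulti n).IsIndepSet B := by simp [B, Set.Pairwise, KMulti]
  obtain ⟨A', hA', hA'card⟩ := hA.exists_subset_sdiff_card_eq huv (k := 2) (by simp [A])
  obtain ⟨B', hB', hB'card⟩ := hB.exists_subset_sdiff_card_eq huv (k := 2) (by simp [B])
  refine ⟨{u, v} ∪ A' ∪ B', ?_, isPlanar_induce_union_of_isIndepSet ?_
    (isIndepSet_of_subset hA hA') (isIndepSet_of_subset hB hB') card_le_two hA'card.le hB'card.le⟩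
  · have hAB : Disjoint A' B' := disjoint_of_subset_left (hA'.trans sdiff_subset) <|
      disjoint_of_subset_right (hB'.trans sdiff_subset) (by simp [A, B, Finset.disjoint_left])
    rw [card_union_of_disjoint, card_union_of_disjoint, card_pair huv.ne, hA'card, hB'card]
    · exact disjoint_of_subset_right hA' disjoint_sdiff
    · exact disjoint_union_left.2 ⟨disjoint_of_subset_right hB' disjoint_sdiff, hAB⟩
  · simp [Set.pairwise_insert, G]

/-- For every edge `e` of `K_{3²,1ⁿ}`, the deletion `K_{3²,1ⁿ} − e` is `n`-apex:
there is a set of 6 vertices whose induced subgraph is planar and whose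
complement has size `n`. -/
theorem stmt_7 (n : ℕ) (u v : Fin 3 ⊕ Fin 3 ⊕ Fin n) (huv : (KMulti n).Adj u v) :
    (∃ S : Finset (Fin 3 ⊕ Fin 3 ⊕ Fin n), S.card = 6 ∧ Sᶜ.card = n ∧
      IsPlanar (((KMulti n).deleteEdges {s(u, v)}).induce
        (↑S : Set (Fin 3 ⊕ Fin 3 ⊕ Fin n)))) ∧
    IsNApex ((KMulti n).deleteEdges {s(u, v)}) n := by
  obtain ⟨S, hS, hplanar⟩ := KMulti.exists_card_eq_six_isPlanar_induce_deleteEdges huv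
  have hSc : #Sᶜ = n := by
    rw [card_compl, hS, Fintype.card_sum, Fintype.card_sum, Fintype.card_fin, Fintype.card_fin]
    omega
  exact ⟨⟨S, hS, hSc, hplanar⟩, Sᶜ, hSc.le, by rwa [coe_compl, compl_compl]⟩
end

section
/- Let G' be obtained from a graph G by a ΔY move on a triangle of G (delete the three edges of the triangle and add a new vertex joined to its three corners). If G is nonplanar, then G' is nonplanar. -/
/-!
Contracting the new vertex into the corner `a` turns `deltaY G a b c` back into `G` with the edge
`bc` deleted, so every minor of `G` that survives the deletion of one triangle edge survives the
ΔY move. A minor model can spare some triangle edge unless the three corners lie in three distinct,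
pairwise adjacent branch sets: otherwise a corner lies in no branch set, or two corners share a
branch set (and the edge from the second of them to the third corner can be rerouted through the
first), or some triangle edge joins non-adjacent branch sets. As `K₃,₃` is triangle-free, what
remains is a `K₅` model with the corners in three of its branch sets; these three, against the new
vertex and the two other branch sets, form a `K₃,₃` model.
-/

open SimpleGraph

/-- `u w` is an edge of the triangle `a b c`. -/
def triEdge {V : Type*} (a b c u w : V) : Prop :=
  (u = a ∧ w = b) ∨ (u = b ∧ w = a) ∨ (u = b ∧ w = c) ∨ (u = c ∧ w = b) ∨
  (u = a ∧ w = c) ∨ (u = c ∧ w = a)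

/-- The result of a ΔY move on the triangle `a b c`: delete its three edges and
add a new vertex (`none`) adjacent exactly to `a`, `b`, `c`. -/
def deltaY {V : Type*} (G : SimpleGraph V) (a b c : V) : SimpleGraph (Option V) :=
  SimpleGraph.fromRel (fun x y =>
    match x, y with
    | some u, some w => G.Adj u w ∧ ¬ triEdge a b c u w
    | none, some u => u = a ∨ u = b ∨ u = c
    | _, _ => False)


open Function

structure IsMinorModel {W V : Type*} (H : SimpleGraph W) (G : SimpleGraph V)
    (f : W → Set V) : Prop where
  nonempty : ∀ w, (f w).Nonempty
  connected : ∀ w, (G.induce (f w)).Connected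
  pairwise_disjoint : Pairwise fun w₁ w₂ => Disjoint (f w₁) (f w₂)
  exists_adj : ∀ ⦃w₁ w₂⦄, H.Adj w₁ w₂ → ∃ v₁ ∈ f w₁, ∃ v₂ ∈ f w₂, G.Adj v₁ v₂

theorem isMinor_iff_exists_isMinorModel {W V : Type*} {H : SimpleGraph W}
    {G : SimpleGraph V} : IsMinor H G ↔ ∃ f, IsMinorModel H G f :=
  ⟨fun ⟨f, h₁, h₂, h₃, h₄⟩ => ⟨f, h₁, h₂, h₃, h₄⟩,
    fun ⟨f, h₁, h₂, h₃, h₄⟩ => ⟨f, h₁, h₂, h₃, h₄⟩⟩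

theorem SimpleGraph.Connected.of_surjective_of_reachable {α β : Type*}
    {G₁ : SimpleGraph α} {G₂ : SimpleGraph β} (h : G₁.Connected) (π : β → α)
    (hπ : Surjective π) (hfib : ∀ x y, π x = π y → G₂.Reachable x y)
    (hadj : ∀ x y, G₁.Adj (π x) (π y) → G₂.Reachable x y) : G₂.Connected := by
  have key : ∀ x u, Relation.ReflTransGen G₁.Adj (π x) u →
      ∀ y, π y = u → G₂.Reachable x y := by
    intro x u hxu
    induction hxu with
    | refl => exact fun y hy => hfib x y hy.symm
    | @tail m _ _ hmu ih =>
      rintro y rfl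
      obtain ⟨z, rfl⟩ := hπ m
      exact (ih z rfl).trans (hadj z y hmu)
  have : Nonempty β := h.nonempty.map fun u => (hπ u).choose
  exact ⟨fun x y => key x (π y) ((reachable_iff_reflTransGen _ _).1 (h _ _)) y rfl⟩

namespace IsMinorModel

variable {W V V' : Type*} {H : SimpleGraph W} {G : SimpleGraph V} {f : W → Set V}

theorem eq_of_mem (hf : IsMinorModel H G f) {v : V} {w₁ w₂ : W} (h₁ : v ∈ f w₁)
    (h₂ : v ∈ f w₂) : w₁ = w₂ := by
  by_contra hne
  exact Set.disjoint_left.1 (hf.pairwise_disjoint hne) h₁ h₂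

theorem comap {G' : SimpleGraph V'} (hf : IsMinorModel H G f) (π : V' → V)
    (hπ : Surjective π) (hfib : ∀ x y, π x = π y → x ≠ y → G'.Adj x y)
    (hlift : ∀ u v, G.Adj u v → ∃ x y, π x = u ∧ π y = v ∧ G'.Adj x y) :
    IsMinorModel H G' fun w => π ⁻¹' f w where
  nonempty w := (hf.nonempty w).preimage hπ
  connected w := by
    have fiber : ∀ x y : π ⁻¹' f w, π x = π y → (G'.induce (π ⁻¹' f w)).Reachable x y := by
      intro x y hxy
      by_cases h : x = y
      · exact h ▸ Reachable.refl x
      · exact Adj.reachable (hfib x y hxy (Subtype.coe_ne_coe.2 h))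
    refine (hf.connected w).of_surjective_of_reachable (fun x => ⟨π x, x.2⟩) ?_
      (fun x y hxy => fiber x y (congrArg Subtype.val hxy)) ?_
    · rintro ⟨u, hu⟩
      obtain ⟨x, rfl⟩ := hπ u
      exact ⟨⟨x, hu⟩, rfl⟩
    · intro x y hxy
      obtain ⟨x', y', hx', hy', hadj⟩ := hlift (π x) (π y) hxy
      have hx'w : π x' ∈ f w := hx' ▸ x.2
      have hy'w : π y' ∈ f w := hy' ▸ y.2
      have hadj' : (G'.induce (π ⁻¹' f w)).Adj ⟨x', hx'w⟩ ⟨y', hy'w⟩ := hadj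
      exact ((fiber x _ hx'.symm).trans hadj'.reachable).trans (fiber _ y hy')
  pairwise_disjoint _ _ h := (hf.pairwise_disjoint h).preimage π
  exists_adj w₁ w₂ h := by
    obtain ⟨v₁, hv₁, v₂, hv₂, hadj⟩ := hf.exists_adj h
    obtain ⟨x, y, rfl, rfl, hxy⟩ := hlift v₁ v₂ hadj
    exact ⟨x, hv₁, y, hv₂, hxy⟩

theorem of_reachable {G₂ : SimpleGraph V} (hf : IsMinorModel H G f)
    (hreach : ∀ w (x y : f w), G.Adj x y → (G₂.induce (f w)).Reachable x y)
    (hadj : ∀ ⦃w₁ w₂⦄, H.Adj w₁ w₂ → ∃ v₁ ∈ f w₁, ∃ v₂ ∈ f w₂, G₂.Adj v₁ v₂) :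
    IsMinorModel H G₂ f where
  nonempty := hf.nonempty
  connected w := (hf.connected w).of_surjective_of_reachable id surjective_id
    (by rintro x _ (rfl : x = _); rfl) (hreach w)
  pairwise_disjoint := hf.pairwise_disjoint
  exists_adj := hadj

theorem deleteEdges_of_forall_not_mem (hf : IsMinorModel H G f) {u : V} (v : V)
    (hu : ∀ w, u ∉ f w) : IsMinorModel H (G.deleteEdges {s(u, v)}) f := by
  have key : ∀ {x y w₁ w₂}, x ∈ f w₁ → y ∈ f w₂ → G.Adj x y →
      (G.deleteEdges {s(u, v)}).Adj x y := by
    intro x y w₁ w₂ hx hy hxy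
    refine (deleteEdges_adj ..).2 ⟨hxy, fun h => ?_⟩
    rcases Sym2.eq_iff.1 (Set.mem_singleton_iff.1 h) with ⟨rfl, -⟩ | ⟨-, rfl⟩
    exacts [hu _ hx, hu _ hy]
  refine hf.of_reachable (fun w x y hxy => ?_) (fun w₁ w₂ h => ?_)
  · exact Adj.reachable (G := (G.deleteEdges {s(u, v)}).induce (f w)) (key x.2 y.2 hxy)
  · obtain ⟨v₁, hv₁, v₂, hv₂, hadj⟩ := hf.exists_adj h
    exact ⟨v₁, hv₁, v₂, hv₂, key hv₁ hv₂ hadj⟩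

theorem deleteEdges_of_not_adj (hf : IsMinorModel H G f) {u v : V} {w₁ w₂ : W}
    (hu : u ∈ f w₁) (hv : v ∈ f w₂) (hne : w₁ ≠ w₂) (hH : ¬ H.Adj w₁ w₂) :
    IsMinorModel H (G.deleteEdges {s(u, v)}) f := by
  have key : ∀ {x y w₁' w₂'}, x ∈ f w₁' → y ∈ f w₂' → G.Adj x y →
      ¬ (G.deleteEdges {s(u, v)}).Adj x y → (w₁' = w₁ ∧ w₂' = w₂) ∨ (w₁' = w₂ ∧ w₂' = w₁) := by
    intro x y w₁' w₂' hx hy hxy hdel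
    simp only [deleteEdges_adj, hxy, Set.mem_singleton_iff, true_and, not_not] at hdel
    rcases Sym2.eq_iff.1 hdel with ⟨rfl, rfl⟩ | ⟨rfl, rfl⟩
    · exact Or.inl ⟨hf.eq_of_mem hx hu, hf.eq_of_mem hy hv⟩
    · exact Or.inr ⟨hf.eq_of_mem hx hv, hf.eq_of_mem hy hu⟩
  refine hf.of_reachable (fun w x y hxy => ?_) (fun w₁' w₂' h => ?_)
  · by_cases hdel : (G.deleteEdges {s(u, v)}).Adj x y
    · exact Adj.reachable (G := (G.deleteEdges {s(u, v)}).induce (f w)) hdel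
    · rcases key x.2 y.2 hxy hdel with ⟨rfl, rfl⟩ | ⟨rfl, rfl⟩ <;> exact absurd rfl hne
  · obtain ⟨v₁, hv₁, v₂, hv₂, hadj⟩ := hf.exists_adj h
    by_cases hdel : (G.deleteEdges {s(u, v)}).Adj v₁ v₂
    · exact ⟨v₁, hv₁, v₂, hv₂, hdel⟩
    · rcases key hv₁ hv₂ hadj hdel with ⟨rfl, rfl⟩ | ⟨rfl, rfl⟩
      exacts [absurd h hH, absurd h.symm hH]

theorem deleteEdges_of_mem (hf : IsMinorModel H G f) {p t r : V} {w : W}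
    (hp : p ∈ f w) (ht : t ∈ f w) (hpt : G.Adj p t) (hpr : G.Adj p r) :
    IsMinorModel H (G.deleteEdges {s(t, r)}) f := by
  have hpt' : (G.deleteEdges {s(t, r)}).Adj p t := by simp [hpt, hpt.ne, hpr.ne]
  have hpr' : (G.deleteEdges {s(t, r)}).Adj p r := by simp [hpr, hpt.ne, hpr.ne]
  refine hf.of_reachable (fun w' x y hxy => ?_) (fun w₁ w₂ h => ?_)
  · obtain ⟨x, hx⟩ := x
    obtain ⟨y, hy⟩ := y
    by_cases hdel : s(x, y) = s(t, r)
    · have detour : ∀ (ht' : t ∈ f w') (hr' : r ∈ f w'),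
          ((G.deleteEdges {s(t, r)}).induce (f w')).Reachable ⟨t, ht'⟩ ⟨r, hr'⟩ := by
        intro ht' hr'
        have hp' : p ∈ f w' := hf.eq_of_mem ht ht' ▸ hp
        have htp : ((G.deleteEdges {s(t, r)}).induce (f w')).Adj ⟨t, ht'⟩ ⟨p, hp'⟩ := hpt'.symm
        exact htp.reachable.trans (Adj.reachable hpr')
      rcases Sym2.eq_iff.1 hdel with ⟨rfl, rfl⟩ | ⟨rfl, rfl⟩
      · exact detour hx hy
      · exact (detour hy hx).symm
    · exact Adj.reachable (G := (G.deleteEdges {s(t, r)}).induce (f w')) (by simp [hxy, hdel])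
  · obtain ⟨v₁, hv₁, v₂, hv₂, hadj⟩ := hf.exists_adj h
    by_cases hdel : s(v₁, v₂) = s(t, r)
    · rcases Sym2.eq_iff.1 hdel with ⟨rfl, rfl⟩ | ⟨rfl, rfl⟩
      · exact ⟨p, hf.eq_of_mem hv₁ ht ▸ hp, v₂, hv₂, hpr'⟩
      · exact ⟨v₁, hv₁, p, hf.eq_of_mem hv₂ ht ▸ hp, hpr'.symm⟩
    · exact ⟨v₁, hv₁, v₂, hv₂, by simp [hadj, hdel]⟩

end IsMinorModel

theorem IsMinor.of_contraction {W V V' : Type*} {H : SimpleGraph W} {G : SimpleGraph V}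
    {G' : SimpleGraph V'} (h : IsMinor H G) (π : V' → V) (hπ : Surjective π)
    (hfib : ∀ x y, π x = π y → x ≠ y → G'.Adj x y)
    (hlift : ∀ u v, G.Adj u v → ∃ x y, π x = u ∧ π y = v ∧ G'.Adj x y) :
    IsMinor H G' := by
  obtain ⟨f, hf⟩ := isMinor_iff_exists_isMinorModel.1 h
  exact isMinor_iff_exists_isMinorModel.2 ⟨_, hf.comap π hπ hfib hlift⟩

section DeltaY

variable {W V : Type*} {H : SimpleGraph W} {G : SimpleGraph V} {a b c : V}

theorem triEdge_comm {u v : V} : triEdge a b c u v ↔ triEdge a b c v u := by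
  unfold triEdge; tauto

@[simp]
theorem deltaY_adj_some_some {u v : V} :
    (deltaY G a b c).Adj (some u) (some v) ↔ G.Adj u v ∧ ¬ triEdge a b c u v := by
  simp only [deltaY, fromRel_adj, ne_eq, Option.some.injEq]
  rw [triEdge_comm (u := v), G.adj_comm v u, or_self]
  exact ⟨And.right, fun h => ⟨h.1.ne, h⟩⟩

@[simp]
theorem deltaY_adj_none_some {u : V} :
    (deltaY G a b c).Adj none (some u) ↔ u = a ∨ u = b ∨ u = c := by
  simp [deltaY]

@[simp]
theorem deltaY_adj_some_none {u : V} :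
    (deltaY G a b c).Adj (some u) none ↔ u = a ∨ u = b ∨ u = c := by
  rw [adj_comm, deltaY_adj_none_some]

theorem deltaY_rotate : deltaY G a b c = deltaY G b c a := by
  ext (_ | u) (_ | v) <;> simp [triEdge] <;> tauto

theorem isMinor_deltaY_of_deleteEdges (h : IsMinor H (G.deleteEdges {s(b, c)})) :
    IsMinor H (deltaY G a b c) := by
  refine h.of_contraction (fun x => x.getD a) (fun u => ⟨some u, rfl⟩) ?_ ?_
  · rintro (_ | u) (_ | v) huv hne <;> simp_all [eq_comm]
  · intro u v huv
    rw [deleteEdges_adj, Set.mem_singleton_iff] at huv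
    by_cases ht : triEdge a b c u v
    · rcases ht with ⟨rfl, rfl⟩ | ⟨rfl, rfl⟩ | ⟨rfl, rfl⟩ | ⟨rfl, rfl⟩ | ⟨rfl, rfl⟩ | ⟨rfl, rfl⟩
      all_goals first
        | exact ⟨none, some _, rfl, rfl, by simp⟩
        | exact ⟨some _, none, rfl, rfl, by simp⟩
        | simp [Sym2.eq_swap] at huv
    · exact ⟨some u, some v, rfl, rfl, deltaY_adj_some_some.2 ⟨huv.1, ht⟩⟩

theorem isMinor_deltaY_of_triEdge {u v : V} (huv : triEdge a b c u v)
    (h : IsMinor H (G.deleteEdges {s(u, v)})) : IsMinor H (deltaY G a b c) := by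
  rcases huv with ⟨rfl, rfl⟩ | ⟨rfl, rfl⟩ | ⟨rfl, rfl⟩ | ⟨rfl, rfl⟩ | ⟨rfl, rfl⟩ | ⟨rfl, rfl⟩
  · rw [deltaY_rotate, deltaY_rotate]; exact isMinor_deltaY_of_deleteEdges h
  · rw [deltaY_rotate, deltaY_rotate]; exact isMinor_deltaY_of_deleteEdges (Sym2.eq_swap ▸ h)
  · exact isMinor_deltaY_of_deleteEdges h
  · exact isMinor_deltaY_of_deleteEdges (Sym2.eq_swap ▸ h)
  · rw [deltaY_rotate]; exact isMinor_deltaY_of_deleteEdges (Sym2.eq_swap ▸ h)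
  · rw [deltaY_rotate]; exact isMinor_deltaY_of_deleteEdges h

theorem isMinor_deltaY_or_exists_triangle_model (hab : G.Adj a b) (hbc : G.Adj b c)
    (hac : G.Adj a c) (h : IsMinor H G) :
    IsMinor H (deltaY G a b c) ∨ ∃ f, IsMinorModel H G f ∧ ∃ wa wb wc,
      a ∈ f wa ∧ b ∈ f wb ∧ c ∈ f wc ∧ H.Adj wa wb ∧ H.Adj wb wc ∧ H.Adj wa wc := by
  obtain ⟨f, hf⟩ := isMinor_iff_exists_isMinorModel.1 h
  have delete : ∀ {u v}, triEdge a b c u v → IsMinorModel H (G.deleteEdges {s(u, v)}) f →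
      IsMinor H (deltaY G a b c) := fun huv hm =>
    isMinor_deltaY_of_triEdge huv (isMinor_iff_exists_isMinorModel.2 ⟨f, hm⟩)
  by_cases hmiss : (∀ w, a ∉ f w) ∨ (∀ w, b ∉ f w) ∨ (∀ w, c ∉ f w)
  · left
    rcases hmiss with ha | hb | hc
    · exact delete (by simp [triEdge]) (hf.deleteEdges_of_forall_not_mem b ha)
    · exact delete (by simp [triEdge]) (hf.deleteEdges_of_forall_not_mem c hb)
    · exact delete (by simp [triEdge]) (hf.deleteEdges_of_forall_not_mem a hc)
  push Not at hmiss
  obtain ⟨⟨wa, ha⟩, ⟨wb, hb⟩, ⟨wc, hc⟩⟩ := hmiss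
  by_cases hsame : wa = wb ∨ wb = wc ∨ wa = wc
  · left
    rcases hsame with rfl | rfl | rfl
    · exact delete (by simp [triEdge]) (hf.deleteEdges_of_mem ha hb hab hac)
    · exact delete (by simp [triEdge]) (hf.deleteEdges_of_mem hb hc hbc hab.symm)
    · exact delete (by simp [triEdge]) (hf.deleteEdges_of_mem ha hc hac hab)
  push Not at hsame
  by_cases hadj : H.Adj wa wb ∧ H.Adj wb wc ∧ H.Adj wa wc
  · exact Or.inr ⟨f, hf, wa, wb, wc, ha, hb, hc, hadj⟩
  left
  simp only [not_and_or] at hadj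
  rcases hadj with hH | hH | hH
  · exact delete (by simp [triEdge]) (hf.deleteEdges_of_not_adj ha hb hsame.1 hH)
  · exact delete (by simp [triEdge]) (hf.deleteEdges_of_not_adj hb hc hsame.2.1 hH)
  · exact delete (by simp [triEdge]) (hf.deleteEdges_of_not_adj ha hc hsame.2.2 hH)

end DeltaY

section K33

variable {W V : Type*} {H : SimpleGraph W} {G : SimpleGraph V} {a b c : V} {f : W → Set V}

theorem connected_deltaY_induce_image_some {S : Set V} (hS : (G.induce S).Connected)
    (htri : ∀ u ∈ S, ∀ v ∈ S, ¬ triEdge a b c u v) :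
    ((deltaY G a b c).induce (some '' S)).Connected :=
  hS.map ⟨fun x => ⟨some x.1, x.1, x.2, rfl⟩,
      fun {x y} hxy => deltaY_adj_some_some.2 ⟨hxy, htri x.1 x.2 y.1 y.2⟩⟩
    (by rintro ⟨_, v, hv, rfl⟩; exact ⟨⟨v, hv⟩, rfl⟩)

theorem IsMinorModel.exists_deltaY_adj_image_some (hf : IsMinorModel H G f) {w w' : W}
    (h : H.Adj w w') (hw' : ∀ v ∈ f w', v ≠ a ∧ v ≠ b ∧ v ≠ c) :
    ∃ v₁ ∈ some '' f w, ∃ v₂ ∈ some '' f w', (deltaY G a b c).Adj v₁ v₂ := by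
  obtain ⟨v₁, hv₁, v₂, hv₂, hadj⟩ := hf.exists_adj h
  refine ⟨some v₁, ⟨v₁, hv₁, rfl⟩, some v₂, ⟨v₂, hv₂, rfl⟩, deltaY_adj_some_some.2 ⟨hadj, ?_⟩⟩
  have := hw' v₂ hv₂
  unfold triEdge
  tauto

theorem IsMinorModel.not_triEdge_of_mem (hf : IsMinorModel H G f) {wa wb wc : W}
    (ha : a ∈ f wa) (hb : b ∈ f wb) (hc : c ∈ f wc) (hab : wa ≠ wb) (hbc : wb ≠ wc)
    (hac : wa ≠ wc) (w : W) : ∀ u ∈ f w, ∀ v ∈ f w, ¬ triEdge a b c u v := by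
  intro u hu v hv huv
  rcases huv with ⟨rfl, rfl⟩ | ⟨rfl, rfl⟩ | ⟨rfl, rfl⟩ | ⟨rfl, rfl⟩ | ⟨rfl, rfl⟩ | ⟨rfl, rfl⟩ <;>
    grind [hf.eq_of_mem]

def hubSets (f : W → Set V) : Option W → Set (Option V) :=
  fun x => x.elim {none} fun w => some '' f w

theorem IsMinorModel.hubSets_nonempty (hf : IsMinorModel H G f) (x : Option W) :
    (hubSets f x).Nonempty := by
  cases x
  exacts [Set.singleton_nonempty none, (hf.nonempty _).image some]

theorem IsMinorModel.hubSets_connected (hf : IsMinorModel H G f)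
    (htri : ∀ w, ∀ u ∈ f w, ∀ v ∈ f w, ¬ triEdge a b c u v) (x : Option W) :
    ((deltaY G a b c).induce (hubSets f x)).Connected := by
  cases x
  · exact (show ((deltaY G a b c).induce {none}).Connected from Connected.of_subsingleton)
  · exact connected_deltaY_induce_image_some (hf.connected _) (htri _)

theorem IsMinorModel.hubSets_pairwise_disjoint (hf : IsMinorModel H G f) :
    Pairwise fun x y => Disjoint (hubSets f x) (hubSets f y) := by
  rintro (_ | w) (_ | w') hne
  · exact absurd rfl hne
  · simp [hubSets]
  · simp [hubSets]
  · exact (hf.pairwise_disjoint (Option.some_injective _ |>.ne_iff.1 hne)).image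
      (Option.some_injective _).injOn (Set.subset_univ _) (Set.subset_univ _)

theorem not_K33_triangle (x y z : Fin 3 ⊕ Fin 3) :
    ¬ (K33.Adj x y ∧ K33.Adj y z ∧ K33.Adj x z) := by
  rcases x with x | x <;> rcases y with y | y <;> rcases z with z | z <;> simp [K33]

theorem isMinor_K33_deltaY_of_K5_model {f : Fin 5 → Set V} (hf : IsMinorModel K5 G f)
    {wa wb wc : Fin 5} (ha : a ∈ f wa) (hb : b ∈ f wb) (hc : c ∈ f wc)
    (hab : wa ≠ wb) (hbc : wb ≠ wc) (hac : wa ≠ wc) :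
    IsMinor K33 (deltaY G a b c) := by
  have two_more : ∀ x y z : Fin 5, ∃ w₄ w₅ : Fin 5,
      w₄ ≠ x ∧ w₄ ≠ y ∧ w₄ ≠ z ∧ w₅ ≠ x ∧ w₅ ≠ y ∧ w₅ ≠ z ∧ w₄ ≠ w₅ := by
    decide
  obtain ⟨w₄, w₅, h₄a, h₄b, h₄c, h₅a, h₅b, h₅c, h₄₅⟩ := two_more wa wb wc
  let φ : Fin 3 ⊕ Fin 3 → Option (Fin 5) :=
    Sum.elim (fun i => some (![wa, wb, wc] i)) ![none, some w₄, some w₅]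
  have hφ : Injective φ := by
    rintro (i | i) (j | j) h <;> fin_cases i <;> fin_cases j <;> simp_all [φ]
  have cross : ∀ w w', w ≠ w' → w' ≠ wa → w' ≠ wb → w' ≠ wc →
      ∃ v₁ ∈ hubSets f (some w), ∃ v₂ ∈ hubSets f (some w'), (deltaY G a b c).Adj v₁ v₂ :=
    fun w w' hww' _ _ _ => hf.exists_deltaY_adj_image_some (show K5.Adj w w' from hww')
      (by grind [hf.eq_of_mem])
  have hside : ∀ i j, ∃ v₁ ∈ hubSets f (φ (.inl i)), ∃ v₂ ∈ hubSets f (φ (.inr j)),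
      (deltaY G a b c).Adj v₁ v₂ := by
    intro i j
    fin_cases i <;> fin_cases j
    all_goals first
      | exact ⟨some _, ⟨_, ‹_›, rfl⟩, none, rfl, by simp⟩
      | exact cross _ _ (by simp [*, Ne.symm]) ‹_› ‹_› ‹_›
  refine isMinor_iff_exists_isMinorModel.2 ⟨hubSets f ∘ φ, fun _ => hf.hubSets_nonempty _,
    fun _ => hf.hubSets_connected (hf.not_triEdge_of_mem ha hb hc hab hbc hac) _,
    hf.hubSets_pairwise_disjoint.comp_of_injective hφ, ?_⟩
  rintro (i | i) (j | j) h
  · simp [K33] at h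
  · exact hside i j
  · obtain ⟨v₁, hv₁, v₂, hv₂, hadj⟩ := hside j i
    exact ⟨v₂, hv₂, v₁, hv₁, hadj.symm⟩
  · simp [K33] at h

end K33

/-- If `G'` is obtained from `G` by a ΔY move on a triangle of `G` and `G` is
nonplanar, then `G'` is nonplanar. -/
theorem stmt_8 {V : Type*} (G : SimpleGraph V) (a b c : V)
    (hab : G.Adj a b) (hbc : G.Adj b c) (hac : G.Adj a c)
    (hG : ¬ IsPlanar G) :
    ¬ IsPlanar (deltaY G a b c) := by
  simp only [IsPlanar, not_and_or, not_not] at hG ⊢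
  rcases hG with hK5 | hK33
  · rcases isMinor_deltaY_or_exists_triangle_model hab hbc hac hK5 with
      h | ⟨f, hf, wa, wb, wc, ha, hb, hc, hwab, hwbc, hwac⟩
    · exact Or.inl h
    · exact Or.inr (isMinor_K33_deltaY_of_K5_model hf ha hb hc hwab.ne hwbc.ne hwac.ne)
  · rcases isMinor_deltaY_or_exists_triangle_model hab hbc hac hK33 with
      h | ⟨-, -, wa, wb, wc, -, -, -, htriangle⟩
    · exact Or.inr h
    · exact absurd htriangle (not_K33_triangle wa wb wc)
end

section
/- The disjoint union G of n+1 copies of K_5 is minor minimal not n-apex: G is not n-apex, but for every edge e of G, both G − e and G/e are n-apex. -/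
open SimpleGraph

/-- Disjoint union of `n` copies of the complete graph on `m` vertices. -/
def copiesK (n m : ℕ) : SimpleGraph (Fin n × Fin m) :=
  SimpleGraph.fromRel (fun x y => x.1 = y.1)

/-!
Planarity is Wagner's: no `K₅` and no `K₃,₃` minor. Both are connected, so the branch sets
of such a minor lie in one component, and a disjoint union is planar as soon as each component
is. Deleting `n` vertices misses some copy of `K₅` altogether. Conversely, after deleting or
contracting an edge of copy `i`, delete vertex `0` of every other copy: each component then
has at most four vertices, or five vertices and a non-edge. A `K₃,₃` minor needs six vertices,
and a `K₅` minor on five vertices has singleton branch sets, i.e. is a complete subgraph.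
-/

open SimpleGraph Function

variable {V W ι : Type*} {G : SimpleGraph V} {H : SimpleGraph W}

lemma SimpleGraph.Reachable.eq_of_forall_adj {c : V → ι} (hc : ∀ ⦃x y⦄, G.Adj x y → c x = c y)
    {x y : V} (h : G.Reachable x y) : c x = c y := by
  obtain ⟨p⟩ := h
  induction p with
  | nil => rfl
  | cons hxy _ ih => exact (hc hxy).trans ih

lemma SimpleGraph.Connected.induce_preimage_val {S T : Set V} (hTS : T ⊆ S)
    (h : (G.induce T).Connected) : ((G.induce S).induce (Subtype.val ⁻¹' T)).Connected :=
  h.map ⟨fun x => ⟨⟨x.1, hTS x.2⟩, x.2⟩, id⟩ fun y => ⟨⟨y.1.1, y.2⟩, rfl⟩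

namespace IsMinor

lemma of_isContained (h : H ⊑ G) : IsMinor H G := by
  obtain ⟨φ⟩ := h
  refine ⟨fun w => {φ w}, fun w => Set.singleton_nonempty _, fun w => ?_,
    fun w₁ w₂ hne => Set.disjoint_singleton.mpr (φ.injective.ne hne),
    fun w₁ w₂ hadj => ⟨_, rfl, _, rfl, φ.toHom.map_adj hadj⟩⟩
  rw [induce_singleton_eq_top]
  exact connected_top

lemma card_le [Finite V] (h : IsMinor H G) : Nat.card W ≤ Nat.card V := by
  obtain ⟨f, hne, -, hdisj, -⟩ := h
  choose x hx using hne
  exact Nat.card_le_card_of_injective x fun w₁ w₂ h =>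
    hdisj.eq (Set.not_disjoint_iff.mpr ⟨x w₁, hx w₁, h ▸ hx w₂⟩)

lemma adj_of_card_le [Finite V] (h : IsMinor (⊤ : SimpleGraph W) G)
    (hcard : Nat.card V ≤ Nat.card W) {p q : V} (hpq : p ≠ q) : G.Adj p q := by
  obtain ⟨f, hne, -, hdisj, hadj⟩ := h
  choose x hx using hne
  have hx_eq : ∀ {w w'}, x w' ∈ f w → w' = w := fun {w w'} hw =>
    hdisj.eq (Set.not_disjoint_iff.mpr ⟨x w', hx w', hw⟩)
  have hinj : Injective x := fun w₁ w₂ h => hx_eq (h ▸ hx w₂)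
  have : Finite W := Finite.of_injective x hinj
  have hsurj : Surjective x := ((Nat.bijective_iff_injective_and_card x).mpr
    ⟨hinj, (Nat.card_le_card_of_injective x hinj).antisymm hcard⟩).2
  have hbranch : ∀ {w z}, z ∈ f w → z = x w := fun {w z} hz => by
    obtain ⟨w', rfl⟩ := hsurj z
    rw [hx_eq hz]
  obtain ⟨wp, rfl⟩ := hsurj p
  obtain ⟨wq, rfl⟩ := hsurj q
  obtain ⟨v₁, hv₁, v₂, hv₂, hv⟩ := hadj (hinj.ne_iff.mp hpq)
  rwa [hbranch hv₁, hbranch hv₂] at hv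

lemma exists_induce_fiber (h : IsMinor H G) (hH : H.Connected) {c : V → ι}
    (hc : ∀ ⦃x y⦄, G.Adj x y → c x = c y) : ∃ a, IsMinor H (G.induce {x | c x = a}) := by
  obtain ⟨f, hne, hconn, hdisj, hadj⟩ := h
  have hconst : ∀ {w z₁ z₂}, z₁ ∈ f w → z₂ ∈ f w → c z₁ = c z₂ := fun h₁ h₂ =>
    ((hconn _).preconnected ⟨_, h₁⟩ ⟨_, h₂⟩).eq_of_forall_adj (c := c ∘ Subtype.val)
      fun _ _ hxy => hc hxy
  choose x hx using hne
  obtain ⟨w₀⟩ := hH.nonempty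
  have hfiber : ∀ w, f w ⊆ {z | c z = c (x w₀)} := fun w z hz =>
    (hconst hz (hx w)).trans <| (hH.preconnected w w₀).eq_of_forall_adj (c := c ∘ x)
      fun w₁ w₂ hw => by
        obtain ⟨v₁, hv₁, v₂, hv₂, hv⟩ := hadj hw
        exact (hconst (hx w₁) hv₁).trans ((hc hv).trans (hconst hv₂ (hx w₂)))
  refine ⟨c (x w₀), fun w => Subtype.val ⁻¹' f w, fun w => ⟨⟨x w, hfiber w (hx w)⟩, hx w⟩,
    fun w => (hconn w).induce_preimage_val (hfiber w),
    fun w₁ w₂ hne => (hdisj hne).preimage _, fun w₁ w₂ hw => ?_⟩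
  obtain ⟨v₁, hv₁, v₂, hv₂, hv⟩ := hadj hw
  exact ⟨⟨v₁, hfiber w₁ hv₁⟩, hv₁, ⟨v₂, hfiber w₂ hv₂⟩, hv₂, hv⟩

end IsMinor

lemma connected_K5 : K5.Connected := connected_top

lemma connected_K33 : K33.Connected := by
  have hreach : ∀ x, K33.Reachable x (.inl 0) := by
    rintro (i | j)
    · exact (Adj.reachable (by simp [K33] : K33.Adj (.inl i) (.inr 0))).trans
        (Adj.reachable (by simp [K33]))
    · exact Adj.reachable (by simp [K33])
  exact ⟨fun x y => (hreach x).trans (hreach y).symm⟩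

lemma isPlanar_of_forall_fiber {c : V → ι} (hc : ∀ ⦃x y⦄, G.Adj x y → c x = c y)
    (h : ∀ a, IsPlanar (G.induce {x | c x = a})) : IsPlanar G := by
  constructor
  · intro hm
    obtain ⟨a, ha⟩ := hm.exists_induce_fiber connected_K5 hc
    exact (h a).1 ha
  · intro hm
    obtain ⟨a, ha⟩ := hm.exists_induce_fiber connected_K33 hc
    exact (h a).2 ha

lemma not_isMinor_K33_of_card_le_five [Finite V] (hV : Nat.card V ≤ 5) : ¬ IsMinor K33 G :=
  fun hm => by simpa using hm.card_le.trans hV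

lemma isPlanar_of_card_le_four [Finite V] (hV : Nat.card V ≤ 4) : IsPlanar G :=
  ⟨fun hm => by simpa using hm.card_le.trans hV,
    not_isMinor_K33_of_card_le_five (by omega)⟩

lemma isPlanar_of_not_adj [Finite V] (hV : Nat.card V ≤ 5) {p q : V} (hpq : p ≠ q)
    (hn : ¬ G.Adj p q) : IsPlanar G :=
  ⟨fun hm => hn (hm.adj_of_card_le (by simpa using hV) hpq),
    not_isMinor_K33_of_card_le_five hV⟩

lemma isPlanar_of_injective_prod_fin_five (π : V → ι × Fin 5) (hπ : Injective π)
    (hc : ∀ ⦃x y⦄, G.Adj x y → (π x).1 = (π y).1)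
    (h : ∀ a, (∃ k, ∀ x, π x ≠ (a, k)) ∨
      ∃ p q, (π p).1 = a ∧ (π q).1 = a ∧ p ≠ q ∧ ¬ G.Adj p q) :
    IsPlanar G := by
  refine isPlanar_of_forall_fiber hc fun a => ?_
  have hinj : Injective fun x : {x | (π x).1 = a} => (π x).2 := fun x y hxy =>
    Subtype.val_injective (hπ (Prod.ext (x.2.trans y.2.symm) hxy))
  have : Finite {x | (π x).1 = a} := Finite.of_injective _ hinj
  rcases h a with ⟨k, hk⟩ | ⟨p, q, hp, hq, hpq, hn⟩
  · refine isPlanar_of_card_le_four ?_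
    have hmiss : ∀ x : {x | (π x).1 = a}, (π x).2 ≠ k := fun x hx =>
      hk x (Prod.ext x.2 hx)
    simpa using Nat.card_le_card_of_injective
      (fun x : {x | (π x).1 = a} => (⟨(π x).2, hmiss x⟩ : {j : Fin 5 // j ≠ k}))
      fun x y hxy => hinj (congrArg Subtype.val hxy)
  · exact isPlanar_of_not_adj (by simpa using Nat.card_le_card_of_injective _ hinj)
      (p := ⟨p, hp⟩) (q := ⟨q, hq⟩) (by simpa using hpq) hn

lemma contractEdge_adj_eq {c : V → ι} (hc : ∀ ⦃x y⦄, G.Adj x y → c x = c y) {u v : V}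
    (huv : c u = c v) {x y : {w // w ≠ v}} (h : (contractEdge G u v).Adj x y) :
    c x.1 = c y.1 := by
  have key : ∀ x y : {w // w ≠ v},
      G.Adj x.1 y.1 ∨ (x.1 = u ∧ G.Adj v y.1) ∨ (y.1 = u ∧ G.Adj v x.1) → c x.1 = c y.1 := by
    rintro x y (hxy | ⟨hx, hvy⟩ | ⟨hy, hvx⟩)
    · exact hc hxy
    · rw [hx, huv, hc hvy]
    · rw [hy, huv, hc hvx]
  rw [contractEdge, fromRel_adj] at h
  exact h.2.elim (key x y) fun hyx => (key y x hyx).symm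

section copiesK

open Finset

variable {n : ℕ}

lemma copiesK_adj_fst {m : ℕ} {x y : Fin n × Fin m} (h : (copiesK n m).Adj x y) : x.1 = y.1 := by
  rw [copiesK, fromRel_adj] at h
  exact h.2.elim id Eq.symm

theorem not_isNApex_copiesK : ¬ IsNApex (copiesK (n + 1) 5) n := by
  rintro ⟨U, hU, hplanar⟩
  obtain ⟨i, -, hi⟩ := exists_mem_notMem_of_card_lt_card (s := U.image Prod.fst) (t := univ)
    (card_image_le.trans_lt (by simpa using hU))
  have hfree : ∀ k : Fin 5, (i, k) ∈ (U : Set (Fin (n + 1) × Fin 5))ᶜ := fun k hk =>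
    hi (mem_image_of_mem Prod.fst hk)
  refine hplanar.1 (IsMinor.of_isContained ⟨⟨fun k => ⟨(i, k), hfree k⟩, fun {k l} hkl => ?_⟩,
    fun k l hkl => by simpa using hkl⟩)
  simpa [copiesK] using hkl.ne

def zeroVerticesExcept (i : Fin (n + 1)) : Finset (Fin (n + 1) × Fin 5) :=
  (univ.erase i).image (·, 0)

lemma card_zeroVerticesExcept_le (i : Fin (n + 1)) : #(zeroVerticesExcept i) ≤ n :=
  card_image_le.trans (by simp)

lemma mem_zeroVerticesExcept {i : Fin (n + 1)} {z : Fin (n + 1) × Fin 5} :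
    z ∈ zeroVerticesExcept i ↔ z.1 ≠ i ∧ z.2 = 0 := by
  obtain ⟨j, k⟩ := z
  simp [zeroVerticesExcept, eq_comm, and_comm]

theorem isNApex_deleteEdges_copiesK {u v : Fin (n + 1) × Fin 5}
    (huv : (copiesK (n + 1) 5).Adj u v) :
    IsNApex ((copiesK (n + 1) 5).deleteEdges {s(u, v)}) n := by
  refine ⟨zeroVerticesExcept u.1, card_zeroVerticesExcept_le _,
    isPlanar_of_injective_prod_fin_five Subtype.val Subtype.val_injective
      (fun x y h => copiesK_adj_fst (deleteEdges_adj.mp h).1) fun a => ?_⟩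
  by_cases ha : a = u.1
  · subst ha
    have hv : v.1 = u.1 := (copiesK_adj_fst huv).symm
    refine .inr ⟨⟨u, ?_⟩, ⟨v, ?_⟩, rfl, hv, fun h => huv.ne (congrArg Subtype.val h), by simp⟩ <;>
      simp [mem_zeroVerticesExcept, hv]
  · exact .inl ⟨0, fun x hx => x.2 (by simp [mem_zeroVerticesExcept, hx, ha])⟩

theorem isNApex_contractEdge_copiesK {u v : Fin (n + 1) × Fin 5}
    (huv : (copiesK (n + 1) 5).Adj u v) :
    IsNApex (contractEdge (copiesK (n + 1) 5) u v) n := by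
  classical
  have hv : v.1 = u.1 := (copiesK_adj_fst huv).symm
  refine ⟨(zeroVerticesExcept u.1).subtype (· ≠ v),
    (card_subtype _ _).trans_le ((card_filter_le _ _).trans (card_zeroVerticesExcept_le _)),
    isPlanar_of_injective_prod_fin_five (fun x => x.1.1)
      (Subtype.val_injective.comp Subtype.val_injective)
      (fun x y h => contractEdge_adj_eq (c := Prod.fst) (fun _ _ => copiesK_adj_fst) hv.symm h)
      fun a => .inl ?_⟩
  by_cases ha : a = u.1
  · exact ⟨v.2, fun x hx => x.1.2 (by rw [hx, ha, ← hv])⟩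
  · exact ⟨0, fun x hx => x.2 (by simp [mem_zeroVerticesExcept, hx, ha])⟩

end copiesK

/-- The disjoint union `G` of `n+1` copies of `K₅` is minor minimal not `n`-apex:
`G` is not `n`-apex, but for every edge `e`, both `G − e` and `G/e` are `n`-apex. -/
theorem stmt_11 (n : ℕ) :
    ¬ IsNApex (copiesK (n + 1) 5) n ∧
    (∀ u v : Fin (n + 1) × Fin 5, (copiesK (n + 1) 5).Adj u v →
      IsNApex ((copiesK (n + 1) 5).deleteEdges {s(u, v)}) n ∧
      IsNApex (contractEdge (copiesK (n + 1) 5) u v) n) :=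
  ⟨not_isNApex_copiesK, fun _ _ huv =>
    ⟨isNApex_deleteEdges_copiesK huv, isNApex_contractEdge_copiesK huv⟩⟩
end
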